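/- If (M,g,J,∇) is a Kähler–Weyl structure of dimension m, then the Weyl 1-form φ satisfies φ = ±(1/(m-2)) J*δΩ, where Ω(x,y) = g(x,Jy) is the Kähler form and δ is the coderivative. -/

import Mathlib

noncomputable section

/-- We model an `m`-dimensional (pseudo-Riemannian) manifold chart as Euclidean space. -/
abbrev E (m : ℕ) := EuclideanSpace ℝ (Fin m)

/-- Vector fields. -/
abbrev VF (m : ℕ) := E m → E m

def SmoothVF {m : ℕ} (X : VF m) : Prop := ContDiff ℝ (⊤ : ℕ∞) X

def SmoothF {m : ℕ} (f : E m → ℝ) : Prop := ContDiff ℝ (⊤ : ℕ∞) f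

/-- The Lie bracket of vector fields. -/
def bracket {m : ℕ} (X Y : VF m) : VF m :=
  fun p => fderiv ℝ Y p (X p) - fderiv ℝ X p (Y p)

/-- A pseudo-Riemannian metric: a smooth, symmetric, nondegenerate field of bilinear forms. -/
structure IsMetric {m : ℕ} (g : E m → E m → E m → ℝ) : Prop where
  smooth : ∀ X Y : VF m, SmoothVF X → SmoothVF Y → SmoothF fun p => g p (X p) (Y p)
  linL : ∀ p w, IsLinearMap ℝ fun v => g p v w
  linR : ∀ p v, IsLinearMap ℝ fun w => g p v w
  symm : ∀ p v w, g p v w = g p w v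
  nondeg : ∀ p v, (∀ w, g p v w = 0) → v = 0

/-- The axioms of an affine connection (acting on smooth vector fields). -/
structure IsConnection {m : ℕ} (D : VF m → VF m → VF m) : Prop where
  smooth : ∀ X Y, SmoothVF X → SmoothVF Y → SmoothVF (D X Y)
  addX : ∀ X X' Y, SmoothVF X → SmoothVF X' → SmoothVF Y → D (X + X') Y = D X Y + D X' Y
  fsmulX : ∀ (f : E m → ℝ) (X Y : VF m), SmoothF f → SmoothVF X → SmoothVF Y →
    D (fun p => f p • X p) Y = fun p => f p • D X Y p
  addY : ∀ X Y Y', SmoothVF X → SmoothVF Y → SmoothVF Y' → D X (Y + Y') = D X Y + D X Y'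
  leibniz : ∀ (X Y : VF m) (f : E m → ℝ), SmoothVF X → SmoothVF Y → SmoothF f →
    D X (fun p => f p • Y p) = fun p => f p • D X Y p + fderiv ℝ f p (X p) • Y p

/-- Torsion-freeness of a connection. -/
def TorsionFree {m : ℕ} (D : VF m → VF m → VF m) : Prop :=
  ∀ X Y : VF m, SmoothVF X → SmoothVF Y → ∀ p, D X Y p - D Y X p = bracket X Y p

/-- `(∇_X g)(Y,Z)` at the point `p`. -/
def covMetric {m : ℕ} (D : VF m → VF m → VF m) (g : E m → E m → E m → ℝ)
    (X Y Z : VF m) (p : E m) : ℝ :=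
  fderiv ℝ (fun q => g q (Y q) (Z q)) p (X p) - g p (D X Y p) (Z p) - g p (Y p) (D X Z p)

/-- `D` is the Levi-Civita connection of `g`. -/
def IsLeviCivita {m : ℕ} (D : VF m → VF m → VF m) (g : E m → E m → E m → ℝ) : Prop :=
  IsConnection D ∧ TorsionFree D ∧
    ∀ X Y Z : VF m, SmoothVF X → SmoothVF Y → SmoothVF Z → ∀ p, covMetric D g X Y Z p = 0

/-- The Weyl condition `∇ g = -2 φ ⊗ g`. -/
def WeylCompat {m : ℕ} (D : VF m → VF m → VF m) (g : E m → E m → E m → ℝ)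
    (φ : E m → E m → ℝ) : Prop :=
  ∀ X Y Z : VF m, SmoothVF X → SmoothVF Y → SmoothVF Z → ∀ p,
    covMetric D g X Y Z p = -2 * φ p (X p) * g p (Y p) (Z p)

/-- A smooth field of 1-forms. -/
structure IsOneForm {m : ℕ} (φ : E m → E m → ℝ) : Prop where
  lin : ∀ p, IsLinearMap ℝ (φ p)
  smooth : ∀ X : VF m, SmoothVF X → SmoothF fun p => φ p (X p)

/-- The connection `∇_X Y = ∇^g_X Y + φ(X)Y + φ(Y)X - g(X,Y)φ*`. -/
def weylD {m : ℕ} (Dg : VF m → VF m → VF m) (g : E m → E m → E m → ℝ)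
    (φ : E m → E m → ℝ) (φs : VF m) : VF m → VF m → VF m :=
  fun X Y p => Dg X Y p + φ p (X p) • Y p + φ p (Y p) • X p - g p (X p) (Y p) • φs p

/-- The curvature operator `R(X,Y)Z` of the connection `D`. -/
def Rop {m : ℕ} (D : VF m → VF m → VF m) (X Y Z : VF m) : VF m :=
  fun p => D X (D Y Z) p - D Y (D X Z) p - D (bracket X Y) Z p

/-- The constant vector field with value `v`. -/
def cVF {m : ℕ} (v : E m) : VF m := fun _ => v

/-- The standard basis of Euclidean space. -/
def bb {m : ℕ} (i : Fin m) : E m := EuclideanSpace.single i (1 : ℝ)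

/-- The Ricci tensor `ρ(x,y) = Tr{z ↦ R(z,x)y}` of the connection `D`
(computed at `p` using the standard coordinate trace). -/
def Ric {m : ℕ} (D : VF m → VF m → VF m) (x y : E m) (p : E m) : ℝ :=
  ∑ i, (Rop D (cVF (bb i)) (cVF x) (cVF y) p) i

/-- The alternating part `ρ_a` of the Ricci tensor. -/
def RicA {m : ℕ} (D : VF m → VF m → VF m) (x y : E m) (p : E m) : ℝ :=
  (Ric D x y p - Ric D y x p) / 2

/-- A para/pseudo-Hermitian structure `J` on `(E m, g)`: `J² = ε·Id` and
`g(Jx,Jy) = -ε g(x,y)`, where `ε = 1` (para) or `ε = -1` (pseudo). -/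
structure IsHermitianJ {m : ℕ} (g : E m → E m → E m → ℝ)
    (J : E m → E m → E m) (ε : ℝ) : Prop where
  sign : ε = 1 ∨ ε = -1
  lin : ∀ p, IsLinearMap ℝ (J p)
  smooth : ∀ X : VF m, SmoothVF X → SmoothVF fun p => J p (X p)
  square : ∀ p v, J p (J p v) = ε • v
  compat : ∀ p v w, g p (J p v) (J p w) = -ε * g p v w

/-- Integrability of `J` : the Nijenhuis tensor vanishes. -/
def Integrable {m : ℕ} (J : E m → E m → E m) (ε : ℝ) : Prop :=
  ∀ X Y : VF m, SmoothVF X → SmoothVF Y → ∀ p,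
    bracket (fun q => J q (X q)) (fun q => J q (Y q)) p
      - J p (bracket (fun q => J q (X q)) Y p)
      - J p (bracket X (fun q => J q (Y q)) p)
      + ε • bracket X Y p = 0

/-- `(∇_Z Ω)(X,Y)` at `p`, where `Ω(x,y) = g(x,Jy)` is the Kähler form;
this is `(∇Ω)(X,Y;Z)` in the notation of the paper. -/
def covOmega {m : ℕ} (Dg : VF m → VF m → VF m) (g : E m → E m → E m → ℝ)
    (J : E m → E m → E m) (X Y Z : VF m) (p : E m) : ℝ :=
  fderiv ℝ (fun q => g q (X q) (J q (Y q))) p (Z p)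
    - g p (Dg Z X p) (J p (Y p)) - g p (X p) (J p (Dg Z Y p))

/-- `∇J = 0` for the connection `D`. -/
def KahlerD {m : ℕ} (D : VF m → VF m → VF m) (J : E m → E m → E m) : Prop :=
  ∀ X Y : VF m, SmoothVF X → SmoothVF Y → ∀ p,
    D X (fun q => J q (Y q)) p = J p (D X Y p)

/-- The Gram matrix of `g` at `p` in the standard basis. -/
def Gram {m : ℕ} (g : E m → E m → E m → ℝ) (p : E m) : Matrix (Fin m) (Fin m) ℝ :=
  Matrix.of fun i j => g p (bb i) (bb j)

/-- The coderivative `δΩ(x) = ε^{ij} (∇^g Ω)(x, e_i ; e_j)` (interior coderivative,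
computed with the inverse Gram matrix). -/
def deltaOmega {m : ℕ} (Dg : VF m → VF m → VF m) (g : E m → E m → E m → ℝ)
    (J : E m → E m → E m) (x : E m) (p : E m) : ℝ :=
  ∑ i, ∑ j, ((Gram g p)⁻¹ i j) * covOmega Dg g J (cVF x) (cVF (bb i)) (cVF (bb j)) p

section Aux
variable {m : ℕ}

lemma smooth_cVF (v : E m) : SmoothVF (cVF v) := contDiff_const

lemma bracket_cVF (x y : E m) (p : E m) : bracket (cVF x) (cVF y) p = 0 := by
  unfold bracket cVF
  simp

lemma expand_vec (w : E m) : ∑ i, w i • bb i = w := by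
  have h := (EuclideanSpace.basisFun (Fin m) ℝ).sum_repr w
  simpa [EuclideanSpace.basisFun_repr, EuclideanSpace.basisFun_apply, bb] using h

lemma g_sum_left (g : E m → E m → E m → ℝ) (hg : IsMetric g) (p : E m)
    (w z : E m) : g p w z = ∑ k, w k * g p (bb k) z := by
  let L := IsLinearMap.mk' _ (hg.linL p z)
  have h : ∀ v, g p v z = L v := fun _ => rfl
  rw [h]
  conv_lhs => rw [← expand_vec w]
  rw [map_sum]
  simp only [map_smul, smul_eq_mul]
  exact Finset.sum_congr rfl fun k _ => by rw [← h]

end Aux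
section Aux2
open Matrix
variable {m : ℕ}

def evL (i : Fin m) : E m →ₗ[ℝ] ℝ :=
  { toFun := fun x => x i, map_add' := fun _ _ => rfl, map_smul' := fun _ _ => rfl }

lemma sum_smul_bb_apply (c : Fin m → ℝ) (i : Fin m) :
    (∑ j, c j • bb j) i = c i := by
  have h1 : (∑ j, c j • bb j) i = evL i (∑ j, c j • bb j) := rfl
  rw [h1, map_sum]
  have h2 : ∀ j, evL i (c j • bb j) = c j * (if i = j then 1 else 0) := by
    intro j
    have : evL i (c j • bb j) = c j * (bb j i) := rfl
    rw [this, bb, EuclideanSpace.single_apply]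
  simp [h2]

lemma g_sum_right (g : E m → E m → E m → ℝ) (hg : IsMetric g) (p : E m)
    (w z : E m) : g p w z = ∑ k, z k * g p w (bb k) := by
  rw [hg.symm, g_sum_left g hg p z w]
  exact Finset.sum_congr rfl fun k _ => by rw [hg.symm]

lemma gram_symm (g : E m → E m → E m → ℝ) (hg : IsMetric g) (p : E m) :
    (Gram g p)ᵀ = Gram g p := by
  ext i j
  simp only [Matrix.transpose_apply, Gram, Matrix.of_apply]
  exact hg.symm p (bb j) (bb i)

lemma gram_det_ne (g : E m → E m → E m → ℝ) (hg : IsMetric g) (p : E m) :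
    (Gram g p).det ≠ 0 := by
  intro hdet
  obtain ⟨v, hv0, hv⟩ := Matrix.exists_mulVec_eq_zero_iff.2 hdet
  set v' : E m := ∑ j, v j • bb j with hv'
  have hcomp : ∀ i, g p (bb i) v' = 0 := by
    intro i
    have h0 := congrFun hv i
    rw [g_sum_right g hg p (bb i) v']
    have h1 : ∀ k, (v' : E m) k = v k := fun k => sum_smul_bb_apply v k
    calc ∑ k, v' k * g p (bb i) (bb k) = ∑ k, Gram g p i k * v k := by
          refine Finset.sum_congr rfl fun k _ => ?_
          rw [h1 k, mul_comm]; rfl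
      _ = 0 := h0
  have hzero : ∀ w, g p v' w = 0 := by
    intro w
    rw [hg.symm, g_sum_left g hg p w v']
    have : ∀ k, w k * g p (bb k) v' = 0 := fun k => by rw [hcomp k, mul_zero]
    simp [this]
  have hv'0 := hg.nondeg p v' hzero
  apply hv0
  funext i
  have := sum_smul_bb_apply v i
  rw [← hv', hv'0] at this
  exact this.symm

lemma gram_inv_mul (g : E m → E m → E m → ℝ) (hg : IsMetric g) (p : E m) :
    (Gram g p)⁻¹ * Gram g p = 1 :=
  Matrix.nonsing_inv_mul _ (isUnit_iff_ne_zero.2 (gram_det_ne g hg p))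

lemma gram_inv_symm (g : E m → E m → E m → ℝ) (hg : IsMetric g) (p : E m)
    (i j : Fin m) : (Gram g p)⁻¹ i j = (Gram g p)⁻¹ j i := by
  have h : ((Gram g p)⁻¹)ᵀ = (Gram g p)⁻¹ := by
    rw [Matrix.transpose_nonsing_inv, gram_symm g hg p]
  exact (congrFun (congrFun h i) j).symm.trans rfl

end Aux2
section Aux3
variable {m : ℕ}

lemma tfree_const {D : VF m → VF m → VF m} (hDT : TorsionFree D)
    (x y p : E m) : D (cVF x) (cVF y) p = D (cVF y) (cVF x) p := by
  have h := hDT (cVF x) (cVF y) (smooth_cVF x) (smooth_cVF y) p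
  rw [bracket_cVF] at h
  have := sub_eq_zero.mp h
  exact this

lemma koszul (g : E m → E m → E m → ℝ) (hg : IsMetric g)
    (D : VF m → VF m → VF m) (hDT : TorsionFree D)
    (ψ : E m → E m → ℝ) (hW : WeylCompat D g ψ) (x y w p : E m) :
    2 * g p (D (cVF x) (cVF y) p) w =
      fderiv ℝ (fun q => g q y w) p x + fderiv ℝ (fun q => g q x w) p y
        - fderiv ℝ (fun q => g q x y) p w
      + 2 * ψ p x * g p y w + 2 * ψ p y * g p x w - 2 * ψ p w * g p x y := by
  have h1 := hW (cVF x) (cVF y) (cVF w) (smooth_cVF x) (smooth_cVF y) (smooth_cVF w) p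
  have h2 := hW (cVF y) (cVF x) (cVF w) (smooth_cVF y) (smooth_cVF x) (smooth_cVF w) p
  have h3 := hW (cVF w) (cVF x) (cVF y) (smooth_cVF w) (smooth_cVF x) (smooth_cVF y) p
  simp only [covMetric, cVF] at h1 h2 h3
  rw [tfree_const hDT y x p] at h2
  rw [tfree_const hDT w x p] at h3
  rw [tfree_const hDT w y p] at h3
  have s1 : g p y (D (cVF x) (cVF w) p) = g p (D (cVF x) (cVF w) p) y := hg.symm _ _ _
  have s2 : g p x (D (cVF y) (cVF w) p) = g p (D (cVF y) (cVF w) p) x := hg.symm _ _ _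
  have s3 : g p x y = g p y x := hg.symm p x y
  have s4 : g p x w = g p w x := hg.symm p x w
  have s5 : g p y w = g p w y := hg.symm p y w
  linarith [h1, h2, h3]

lemma koszul_diff (g : E m → E m → E m → ℝ) (hg : IsMetric g)
    (Dg : VF m → VF m → VF m) (hDg : IsLeviCivita Dg g)
    (D : VF m → VF m → VF m) (hDT : TorsionFree D)
    (φ : E m → E m → ℝ) (hW : WeylCompat D g φ) (x y w p : E m) :
    g p (D (cVF x) (cVF y) p) w = g p (Dg (cVF x) (cVF y) p) w
      + φ p x * g p y w + φ p y * g p x w - φ p w * g p x y := by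
  have hWg : WeylCompat Dg g (fun _ _ => 0) := by
    intro X Y Z hX hY hZ p'
    rw [hDg.2.2 X Y Z hX hY hZ p']
    ring
  have h1 := koszul g hg D hDT φ hW x y w p
  have h2 := koszul g hg Dg hDg.2.1 (fun _ _ => 0) hWg x y w p
  linarith

lemma Jskew (g : E m → E m → E m → ℝ) (hg : IsMetric g)
    (J : E m → E m → E m) (ε : ℝ) (hJ : IsHermitianJ g J ε)
    (p x y : E m) : g p (J p x) y = - g p x (J p y) := by
  have h := hJ.compat p x (J p y)
  rw [hJ.square] at h
  have h2 : g p (J p x) (ε • y) = ε * g p (J p x) y := by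
    have := (hg.linR p (J p x)).map_smul ε y
    simpa [smul_eq_mul] using this
  rw [h2] at h
  have hε : ε ≠ 0 := by rcases hJ.sign with h' | h' <;> rw [h'] <;> norm_num
  field_simp at h
  exact h
end Aux3
section Aux4
variable {m : ℕ}

lemma covOmega_formula (g : E m → E m → E m → ℝ) (hg : IsMetric g)
    (Dg : VF m → VF m → VF m) (hDg : IsLeviCivita Dg g)
    (J : E m → E m → E m) (ε : ℝ) (hJ : IsHermitianJ g J ε)
    (D : VF m → VF m → VF m) (hDT : TorsionFree D)
    (φ : E m → E m → ℝ) (hW : WeylCompat D g φ)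
    (hDJ : KahlerD D J) (x y z p : E m) :
    covOmega Dg g J (cVF x) (cVF y) (cVF z) p =
      φ p x * g p z (J p y) + φ p y * g p x (J p z)
        - φ p (J p y) * g p z x + φ p (J p x) * g p z y := by
  have hJy : SmoothVF (fun q => J q ((cVF y) q)) := hJ.smooth (cVF y) (smooth_cVF y)
  -- the derivative identity from Weyl compatibility with Z = J∘y
  have h1 := hW (cVF z) (cVF x) (fun q => J q ((cVF y) q))
      (smooth_cVF z) (smooth_cVF x) hJy p
  have hdj := hDJ (cVF z) (cVF y) (smooth_cVF z) (smooth_cVF y) p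
  simp only [covMetric, cVF] at h1
  simp only [cVF] at hdj
  rw [hdj] at h1
  -- h1 : fderiv (fun q => g q x (J q y)) p z - g p (D z x p) (J p y)
  --        - g p x (J p (D z y p)) = -2 φ z * g p x (J p y)
  -- Koszul differences
  have k1 := koszul_diff g hg Dg hDg D hDT φ hW z x (J p y) p
  have k2 := koszul_diff g hg Dg hDg D hDT φ hW z y (J p x) p
  -- relate g p x (J p A) with g p A (J p x)
  have flip : ∀ A : E m, g p x (J p A) = - g p A (J p x) := by
    intro A
    rw [hg.symm p x (J p A), Jskew g hg J ε hJ p A x, hg.symm p A (J p x)]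
  have f1 := flip (D (cVF z) (cVF y) p)
  have f2 := flip (Dg (cVF z) (cVF y) p)
  -- skew identities for constants
  have sk1 : g p y (J p x) = - g p x (J p y) := by
    rw [hg.symm p y (J p x), Jskew g hg J ε hJ p x y]
  have sk2 : g p z (J p x) = - g p x (J p z) := by
    rw [hg.symm p z (J p x), Jskew g hg J ε hJ p x z]
  rw [sk1, sk2] at k2
  simp only [covOmega, cVF]
  -- goal: fderiv ... p z - g p (Dg z x p) (J p y) - g p x (J p (Dg z y p)) = ...
  linarith [h1, k1, k2, f1, f2]
end Aux4
section Aux5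
variable {m : ℕ}

lemma contract_core (g : E m → E m → E m → ℝ) (hg : IsMetric g) (p : E m)
    (w : E m) (i : Fin m) :
    ∑ j, (Gram g p)⁻¹ i j * g p w (bb j) = w i := by
  have hG := gram_inv_mul g hg p
  calc ∑ j, (Gram g p)⁻¹ i j * g p w (bb j)
      = ∑ j, ∑ k, w k * ((Gram g p)⁻¹ i j * Gram g p j k) := by
        refine Finset.sum_congr rfl fun j _ => ?_
        rw [g_sum_left g hg p w (bb j), Finset.mul_sum]
        refine Finset.sum_congr rfl fun k _ => ?_
        have hgr : g p (bb k) (bb j) = Gram g p j k := hg.symm p (bb k) (bb j)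
        rw [hgr]; ring
    _ = ∑ k, w k * ∑ j, (Gram g p)⁻¹ i j * Gram g p j k := by
        rw [Finset.sum_comm]
        exact Finset.sum_congr rfl fun k _ => (Finset.mul_sum _ _ _).symm
    _ = w i := by
        have h1 : ∀ k, ∑ j, (Gram g p)⁻¹ i j * Gram g p j k
            = (1 : Matrix (Fin m) (Fin m) ℝ) i k := by
          intro k
          rw [← hG, Matrix.mul_apply]
        simp only [h1, Matrix.one_apply]
        simp

lemma contract (g : E m → E m → E m → ℝ) (hg : IsMetric g) (p : E m)
    (α : E m → ℝ) (hα : IsLinearMap ℝ α) (w : E m) :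
    ∑ i, ∑ j, (Gram g p)⁻¹ i j * (α (bb i) * g p w (bb j)) = α w := by
  calc ∑ i, ∑ j, (Gram g p)⁻¹ i j * (α (bb i) * g p w (bb j))
      = ∑ i, α (bb i) * ∑ j, (Gram g p)⁻¹ i j * g p w (bb j) := by
        refine Finset.sum_congr rfl fun i _ => ?_
        rw [Finset.mul_sum]
        exact Finset.sum_congr rfl fun j _ => by ring
    _ = ∑ i, α (bb i) * w i := by
        refine Finset.sum_congr rfl fun i _ => ?_
        rw [contract_core g hg p w i]
    _ = α w := by
        let L := IsLinearMap.mk' _ hα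
        have hL : ∀ v, α v = L v := fun _ => rfl
        conv_rhs => rw [hL, ← expand_vec w, map_sum]
        simp only [map_smul, smul_eq_mul]
        exact Finset.sum_congr rfl fun i _ => by rw [← hL]; ring

lemma trace_sum (g : E m → E m → E m → ℝ) (hg : IsMetric g) (p : E m) :
    ∑ i, ∑ j, (Gram g p)⁻¹ i j * g p (bb j) (bb i) = (m : ℝ) := by
  have hG := gram_inv_mul g hg p
  have h1 : ∀ i : Fin m, ∑ j, (Gram g p)⁻¹ i j * g p (bb j) (bb i)
      = (1 : Matrix (Fin m) (Fin m) ℝ) i i := by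
    intro i
    rw [← hG, Matrix.mul_apply]
    exact Finset.sum_congr rfl fun _ _ => rfl
  simp only [h1, Matrix.one_apply_eq]
  simp

lemma skew_sum (g : E m → E m → E m → ℝ) (hg : IsMetric g)
    (J : E m → E m → E m) (ε : ℝ) (hJ : IsHermitianJ g J ε) (p : E m) :
    ∑ i, ∑ j, (Gram g p)⁻¹ i j * g p (bb j) (J p (bb i)) = 0 := by
  set S := ∑ i, ∑ j, (Gram g p)⁻¹ i j * g p (bb j) (J p (bb i)) with hS
  have h : S = -S := by
    calc S = ∑ j, ∑ i, (Gram g p)⁻¹ i j * g p (bb j) (J p (bb i)) := Finset.sum_comm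
      _ = ∑ j, ∑ i, (Gram g p)⁻¹ j i * (- g p (bb i) (J p (bb j))) := by
          refine Finset.sum_congr rfl fun j _ => Finset.sum_congr rfl fun i _ => ?_
          have e2 : g p (bb j) (J p (bb i)) = - g p (bb i) (J p (bb j)) := by
            rw [hg.symm p (bb j) (J p (bb i)), Jskew g hg J ε hJ p (bb i) (bb j)]
          rw [gram_inv_symm g hg p i j, e2]
      _ = -S := by
          rw [hS]
          rw [← Finset.sum_neg_distrib]
          refine Finset.sum_congr rfl fun j _ => ?_
          rw [← Finset.sum_neg_distrib]
          exact Finset.sum_congr rfl fun i _ => by ring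
  linarith
end Aux5
section Aux6
variable {m : ℕ}

lemma deltaOmega_eq (g : E m → E m → E m → ℝ) (hg : IsMetric g)
    (Dg : VF m → VF m → VF m) (hDg : IsLeviCivita Dg g)
    (J : E m → E m → E m) (ε : ℝ) (hJ : IsHermitianJ g J ε)
    (D : VF m → VF m → VF m) (hDT : TorsionFree D)
    (φ : E m → E m → ℝ) (hφ : IsOneForm φ) (hW : WeylCompat D g φ)
    (hDJ : KahlerD D J) (x p : E m) :
    deltaOmega Dg g J x p = ((m : ℝ) - 2) * φ p (J p x) := by
  have hα : IsLinearMap ℝ (fun v => φ p (J p v)) :=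
    ⟨fun a b => by rw [(hJ.lin p).map_add, (hφ.lin p).map_add],
     fun c a => by rw [(hJ.lin p).map_smul, (hφ.lin p).map_smul]⟩
  have hflip : ∀ w : E m, g p x (J p w) = - g p (J p x) w := by
    intro w
    rw [Jskew g hg J ε hJ p x w]
    ring
  calc deltaOmega Dg g J x p
      = ∑ i, ∑ j, (φ p x * ((Gram g p)⁻¹ i j * g p (bb j) (J p (bb i)))
          - (Gram g p)⁻¹ i j * (φ p (bb i) * g p (J p x) (bb j))
          - (Gram g p)⁻¹ i j * (φ p (J p (bb i)) * g p x (bb j))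
          + φ p (J p x) * ((Gram g p)⁻¹ i j * g p (bb j) (bb i))) := by
        unfold deltaOmega
        refine Finset.sum_congr rfl fun i _ => Finset.sum_congr rfl fun j _ => ?_
        rw [covOmega_formula g hg Dg hDg J ε hJ D hDT φ hW hDJ x (bb i) (bb j) p]
        rw [hflip (bb j), hg.symm p (bb j) x]
        ring
    _ = ((m : ℝ) - 2) * φ p (J p x) := by
        simp only [Finset.sum_add_distrib, Finset.sum_sub_distrib, ← Finset.mul_sum]
        rw [skew_sum g hg J ε hJ p, trace_sum g hg p,
          contract g hg p (φ p) (hφ.lin p) (J p x),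
          contract g hg p (fun v => φ p (J p v)) hα x]
        ring
end Aux6
/-- in a Kähler–Weyl structure of dimension `m`, the Weyl 1-form is
`φ = ± (1/(m-2)) J^* δΩ` (the sign `ε = ±1` matching `J² = ± Id`). -/
theorem statement8 {m : ℕ} (hm : 4 ≤ m) (g : E m → E m → E m → ℝ) (hg : IsMetric g)
    (Dg : VF m → VF m → VF m) (hDg : IsLeviCivita Dg g)
    (J : E m → E m → E m) (ε : ℝ) (hJ : IsHermitianJ g J ε) (hJint : Integrable J ε)
    (D : VF m → VF m → VF m) (hD : IsConnection D) (hDT : TorsionFree D)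
    (φ : E m → E m → ℝ) (hφ : IsOneForm φ) (hW : WeylCompat D g φ)
    (hDJ : KahlerD D J) :
    ∀ (p : E m) (v : E m),
      φ p v = ε / ((m : ℝ) - 2) * deltaOmega Dg g J (J p v) p := by
  intro p v
  rw [deltaOmega_eq g hg Dg hDg J ε hJ D hDT φ hφ hW hDJ (J p v) p]
  rw [hJ.square p v, (hφ.lin p).map_smul]
  have hε2 : ε * ε = 1 := by rcases hJ.sign with h | h <;> rw [h] <;> norm_num
  have hne : ((m : ℝ)) - 2 ≠ 0 := by
    have h4 : (4 : ℝ) ≤ (m : ℝ) := by exact_mod_cast hm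
    linarith
  field_simp
  linear_combination (-φ p v) * hε2
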